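/- Let K be a hexagonal trefoil knot with the Huh–Jeon pattern and quadrisecants L1, L2, L3 meeting edge sets {e12,e23,e45,e56}, {e23,e34,e56,e61}, {e34,e45,e61,e12} respectively. Then the intersection point p³₁₂ = L3 ∩ e12 lies strictly between the vertex v2 and the point p¹₁₂ = L1 ∩ e12 along the edge e12... equivalently, p³₁₂ lies in the open half-space P5⁺ containing v2, while p¹₁₂ lies on P5. -/

import Mathlib

noncomputable section

/-- Points of ℝ³. -/
abbrev E3 : Type := Fin 3 → ℝ

/-- A line in ℝ³: the affine span of two distinct points, viewed as a set. -/
def IsLine (L : Set E3) : Prop :=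
  ∃ p q : E3, p ≠ q ∧ L = (affineSpan ℝ ({p, q} : Set E3) : Set E3)

/-- A plane: an affine subspace of dimension 2. -/
def IsPlane (P : AffineSubspace ℝ E3) : Prop :=
  Module.finrank ℝ P.direction = 2

/-- A (combinatorial) hexagon: six vertices in ℝ³, joined cyclically.
Paper vertex `v_i` corresponds to `v (i-1)`, paper edge `e_{i,i+1}` to `edge (i-1)`,
paper disk `Δ_i` to `disk (i-1)`, paper plane `P_i` to `P (i-1)`. -/
structure Hexagon where
  v : Fin 6 → E3

namespace Hexagon

variable (H : Hexagon)

/-- The closed edge from `v i` to `v (i+1)`. -/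
def edge (i : Fin 6) : Set E3 := segment ℝ (H.v i) (H.v (i + 1))

/-- The open edge (interior of the edge) from `v i` to `v (i+1)`. -/
def intEdge (i : Fin 6) : Set E3 := openSegment ℝ (H.v i) (H.v (i + 1))

/-- The hexagonal closed polygonal curve: union of the six edges. -/
def K : Set E3 := ⋃ i, H.edge i

/-- The triangular disk with vertices `v (i-1)`, `v i`, `v (i+1)`. -/
def disk (i : Fin 6) : Set E3 := convexHull ℝ ({H.v (i - 1), H.v i, H.v (i + 1)} : Set E3)

/-- The plane through `v (i-1)`, `v i`, `v (i+1)`. -/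
def P (i : Fin 6) : AffineSubspace ℝ E3 :=
  affineSpan ℝ ({H.v (i - 1), H.v i, H.v (i + 1)} : Set E3)

/-- General position: no three vertices collinear, no four vertices coplanar. -/
def GeneralPosition : Prop :=
  (∀ i j k : Fin 6, i ≠ j → i ≠ k → j ≠ k →
    ¬ Collinear ℝ ({H.v i, H.v j, H.v k} : Set E3)) ∧
  (∀ i j k l : Fin 6, i ≠ j → i ≠ k → i ≠ l → j ≠ k → j ≠ l → k ≠ l →
    ¬ Coplanar ℝ ({H.v i, H.v j, H.v k, H.v l} : Set E3))

/-- The Huh–Jeon intersection pattern: the only nonempty intersections of open edges with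
interiors of triangular disks are `int e23 ∩ int Δ5`, `int e23 ∩ int Δ6`, `int e45 ∩ int Δ1`,
`int e45 ∩ int Δ2`, `int e61 ∩ int Δ3`, `int e61 ∩ int Δ4` (in the paper's labels). -/
def HuhJeon : Prop :=
  ∀ i j : Fin 6, (H.intEdge i ∩ intrinsicInterior ℝ (H.disk j)).Nonempty ↔
    (i, j) ∈ ({(1, 4), (1, 5), (3, 0), (3, 1), (5, 2), (5, 3)} : Set (Fin 6 × Fin 6))

/-- The candidate quadrisecant line `L_{k+1}` of the paper: the intersection of the planes
`P (k+1)` and `P (k+4)` (for `k = 0, 1, 2`).  `QLine 0` is the paper's `L₁ = P₂ ∩ P₅`,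
`QLine 1` is `L₂ = P₃ ∩ P₆`, and `QLine 2` is `L₃ = P₄ ∩ P₁`. -/
def QLine (k : Fin 6) : Set E3 := (H.P (k + 1) : Set E3) ∩ (H.P (k + 4) : Set E3)

end Hexagon

/-- `L` is a quadrisecant of the curve `K`: a line meeting `K` in at least four points. -/
def IsQuadrisecantOf (K L : Set E3) : Prop :=
  IsLine L ∧ ∃ S : Finset E3, S.card = 4 ∧ (S : Set E3) ⊆ K ∩ L

/-- A quadrisecant of the hexagonal knot `H`. -/
def Hexagon.IsQuadrisecant (H : Hexagon) (L : Set E3) : Prop :=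
  IsQuadrisecantOf H.K L

/-- A standard parametrization of the trefoil knot. -/
def trefoilCurve (t : ℝ) : E3 :=
  ![Real.sin t + 2 * Real.sin (2 * t), Real.cos t - 2 * Real.cos (2 * t), - Real.sin (3 * t)]

/-- The standard trefoil knot as a subset of ℝ³. -/
def TrefoilSet : Set E3 := Set.range trefoilCurve

/-- The standard planar round circle (the unknot). -/
def UnknotSet : Set E3 := {x : E3 | x 0 ^ 2 + x 1 ^ 2 = 1 ∧ x 2 = 0}

/-- Two subsets of ℝ³ are equivalent as knots if there is an ambient isotopy of ℝ³
carrying one onto the other. -/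
def KnotEquiv (K₁ K₂ : Set E3) : Prop :=
  ∃ F : ℝ → (E3 ≃ₜ E3), Continuous (fun p : ℝ × E3 => F p.1 p.2) ∧
    F 0 = Homeomorph.refl E3 ∧ (F 1) '' K₁ = K₂

/-- `K` has the knot type of the trefoil. -/
def IsTrefoil (K : Set E3) : Prop := KnotEquiv K TrefoilSet

/-- `K` is an unknot: it has the knot type of a planar circle. -/
def IsUnknot (K : Set E3) : Prop := KnotEquiv K UnknotSet

/-- The closed polygonal curve with vertices `v 0, …, v (n-1)` joined cyclically. -/
def polyCurve (n : ℕ) [NeZero n] (v : Fin n → E3) : Set E3 :=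
  ⋃ i, segment ℝ (v i) (v (i + 1))

/-- `v` determines an embedded (simple) closed polygonal curve: distinct vertices,
adjacent edges meet exactly at their common vertex, non-adjacent edges are disjoint. -/
def IsSimplePolygon (n : ℕ) [NeZero n] (v : Fin n → E3) : Prop :=
  3 ≤ n ∧ Function.Injective v ∧
  (∀ i : Fin n,
    segment ℝ (v i) (v (i + 1)) ∩ segment ℝ (v (i + 1)) (v (i + 2)) = {v (i + 1)}) ∧
  (∀ i j : Fin n, j ≠ i → j ≠ i + 1 → j + 1 ≠ i →
    segment ℝ (v i) (v (i + 1)) ∩ segment ℝ (v j) (v (j + 1)) = ∅)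

namespace Hexagon

/-- The quadrisecant approximation determined by marked points `c i`, `d i` on edge `i`:
`O i = [c i, d i]` (straightened part of edge `i`) and `N i = [d (i-1), c i]`
(the segment cutting the corner at `v i`). -/
def QA (H : Hexagon) (c d : Fin 6 → E3) : Set E3 :=
  (⋃ i, segment ℝ (c i) (d i)) ∪ (⋃ i, segment ℝ (d (i - 1)) (c i))

/-- `c i`, `d i` are exactly the quadrisecant points on edge `i`, occurring in the
order `v i, c i, d i, v (i+1)` along the edge. -/
def QAData (H : Hexagon) (c d : Fin 6 → E3) : Prop :=
  ∀ i : Fin 6,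
    ({c i, d i} : Set E3) = H.edge i ∩ (H.QLine 0 ∪ H.QLine 1 ∪ H.QLine 2) ∧
    Sbtw ℝ (H.v i) (c i) (d i) ∧ Sbtw ℝ (c i) (d i) (H.v (i + 1))

end Hexagon

/-! The point `y = p¹₁₂` is where `P5` crosses `e12`, and `x = p³₁₂` is where `P4` crosses it.
Two Huh–Jeon crossings locate `y` relative to `P4`: `e61` passes through `Δ4 ⊆ P4`, so `v6` and `v1`
lie strictly on opposite sides of `P4`; and `e45 ⊆ P4 ∩ P5` passes through `Δ1`, at a point strictly
between `v6` and a point of `e12` which must lie on `P5`, hence is `y`, so `v6` and `y` are also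
strictly opposite. Thus `y` is strictly on the side of `v1`, which forces the order
`v1, y, x, v2` along `e12`; as `y ∈ P5`, the point `x` is then on the side of `v2`. -/

section Betweenness

variable {R V Pt : Type*} [Field R] [LinearOrder R] [IsStrictOrderedRing R]
  [AddCommGroup V] [Module R V] [AddTorsor V Pt]

theorem Wbtw.wbtw_or_wbtw_of_wbtw {p q a b : Pt} (ha : Wbtw R p a q) (hb : Wbtw R p b q) :
    Wbtw R p a b ∨ Wbtw R p b a := by
  obtain ⟨t, ht, rfl⟩ := ha
  obtain ⟨u, hu, rfl⟩ := hb
  simp only [AffineMap.lineMap_apply]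
  exact wbtw_or_wbtw_smul_vadd_of_nonneg _ _ ht.1 hu.1

theorem eq_of_wbtw_of_wbtw_of_mem {s : AffineSubspace R Pt} {p q a b : Pt}
    (ha : Wbtw R p a q) (hb : Wbtw R p b q) (has : a ∈ s) (hbs : b ∈ s) (hp : p ∉ s) :
    a = b := by
  by_contra hab
  rcases ha.wbtw_or_wbtw_of_wbtw hb with hpab | hpba
  · exact hp (AffineSubspace.right_mem_of_wbtw hpab.symm hbs has (Ne.symm hab))
  · exact hp (AffineSubspace.right_mem_of_wbtw hpba.symm has hbs hab)

theorem sbtw_of_wbtw_of_sSameSide {s : AffineSubspace R Pt} {p q x y : Pt}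
    (hx : Wbtw R p x q) (hy : Wbtw R p y q) (hxs : x ∈ s) (hq : q ∉ s)
    (hpy : s.SSameSide p y) : Sbtw R q x y := by
  rcases hx.wbtw_or_wbtw_of_wbtw hy with hpxy | hpyx
  · exact absurd (hpxy.wOppSide₁₃ hxs) hpy.not_wOppSide
  · refine ⟨(hx.trans_left_right hpyx).symm, ?_, ?_⟩
    · rintro rfl
      exact hq hxs
    · rintro rfl
      exact hpy.2.2 hxs

end Betweenness

theorem coplanar_of_mem_affineSpan_pair {k V Pt : Type*} [DivisionRing k] [AddCommGroup V]
    [Module k V] [AddTorsor V Pt] {p q r s c : Pt} (hc : c ∈ line[k, p, q])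
    (hs : s ∈ line[k, r, c]) : Coplanar k ({s, p, q, r} : Set Pt) := by
  have hle : line[k, r, c] ≤ affineSpan k {p, q, r} :=
    affineSpan_pair_le_of_mem_of_mem (mem_affineSpan k (by simp))
      (affineSpan_mono k (by simp [Set.insert_subset_iff]) hc)
  rw [coplanar_insert_iff_of_mem_affineSpan (hle hs)]
  exact coplanar_triple k p q r

theorem exists_mem_segment_of_mem_convexHull_triple {𝕜 E : Type*} [Field 𝕜] [LinearOrder 𝕜]
    [IsStrictOrderedRing 𝕜] [AddCommGroup E] [Module 𝕜 E] {a b c x : E}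
    (hx : x ∈ convexHull 𝕜 ({a, b, c} : Set E)) :
    ∃ z ∈ segment 𝕜 b c, x ∈ segment 𝕜 a z := by
  rw [convexHull_insert (by simp), convexJoin_singleton_left, convexHull_pair] at hx
  simpa using hx

namespace Hexagon

variable {H : Hexagon}

theorem disk_subset_P (i : Fin 6) : H.disk i ⊆ H.P i :=
  convexHull_subset_affineSpan _

theorem GeneralPosition.v_notMem_P (hgp : H.GeneralPosition) {i l : Fin 6}
    (h₁ : l ≠ i - 1) (h₂ : l ≠ i) (h₃ : l ≠ i + 1) : H.v l ∉ H.P i := by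
  have hdistinct : ∀ i : Fin 6, i - 1 ≠ i ∧ i - 1 ≠ i + 1 ∧ i ≠ i + 1 := by decide
  obtain ⟨h₄, h₅, h₆⟩ := hdistinct i
  intro hl
  exact hgp.2 l (i - 1) i (i + 1) h₁ h₂ h₃ h₄ h₅ h₆
    ((coplanar_insert_iff_of_mem_affineSpan hl).2 (coplanar_triple ℝ _ _ _))

theorem v_sub_one_mem_P (i : Fin 6) : H.v (i - 1) ∈ H.P i :=
  mem_affineSpan ℝ (by simp)

theorem v_mem_P (i : Fin 6) : H.v i ∈ H.P i :=
  mem_affineSpan ℝ (by simp)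

theorem v_add_one_mem_P (i : Fin 6) : H.v (i + 1) ∈ H.P i :=
  mem_affineSpan ℝ (by simp)

/-- The crossing of `e61` through the disk `Δ4` puts `v6` and `v1` on opposite sides of `P4`. -/
theorem HuhJeon.sOppSide_P_three (hgp : H.GeneralPosition) (hhj : H.HuhJeon) :
    (H.P 3).SOppSide (H.v 5) (H.v 0) := by
  obtain ⟨a, ha_edge, ha_disk⟩ := (hhj 5 3).2 (by simp)
  have haP : a ∈ H.P 3 := H.disk_subset_P 3 (intrinsicInterior_subset ha_disk)
  have h5a0 : Wbtw ℝ (H.v 5) a (H.v 0) :=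
    mem_segment_iff_wbtw.1 (openSegment_subset_segment _ _ _ ha_edge)
  exact ⟨h5a0.wOppSide₁₃ haP, hgp.v_notMem_P (by decide) (by decide) (by decide),
    hgp.v_notMem_P (by decide) (by decide) (by decide)⟩

/-- The crossing of `e45` through the disk `Δ1` is a point `c` of `P4 ∩ P5` lying strictly
between `v6` and a point `z` of `e12`; then `z ∈ P5` and `z` is opposite to `v6` across `P4`. -/
theorem HuhJeon.exists_wbtw_mem_P_four_sOppSide (hgp : H.GeneralPosition) (hhj : H.HuhJeon) :
    ∃ z, Wbtw ℝ (H.v 0) z (H.v 1) ∧ z ∈ H.P 4 ∧ (H.P 3).SOppSide (H.v 5) z := by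
  obtain ⟨c, hc_edge, hc_disk⟩ := (hhj 3 0).2 (by simp)
  replace hc_disk := intrinsicInterior_subset hc_disk
  obtain ⟨z, hz, hcz⟩ := exists_mem_segment_of_mem_convexHull_triple hc_disk
  have h5cz : Wbtw ℝ (H.v 5) c z := mem_segment_iff_wbtw.1 hcz
  have h0z1 : Wbtw ℝ (H.v 0) z (H.v 1) := mem_segment_iff_wbtw.1 hz
  have h3c4 : Wbtw ℝ (H.v 3) c (H.v 4) :=
    mem_segment_iff_wbtw.1 (openSegment_subset_segment _ _ _ hc_edge)
  have hcP : c ∈ H.P 3 := AffineSubspace.mem_of_wbtw h3c4 (H.v_mem_P 3) (H.v_add_one_mem_P 3)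
  have hcQ : c ∈ H.P 4 := AffineSubspace.mem_of_wbtw h3c4 (H.v_sub_one_mem_P 4) (H.v_mem_P 4)
  have hv5P : H.v 5 ∉ H.P 3 := hgp.v_notMem_P (by decide) (by decide) (by decide)
  have hv5c : H.v 5 ≠ c := fun h => hv5P (h ▸ hcP)
  have hcz_ne : c ≠ z := by
    rintro rfl
    have hv3c : H.v 3 ≠ c := fun h =>
      hgp.v_notMem_P (i := 0) (by decide) (by decide) (by decide) (h ▸ H.disk_subset_P 0 hc_disk)
    exact hgp.2 4 0 1 3 (by decide) (by decide) (by decide) (by decide) (by decide) (by decide)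
      (coplanar_of_mem_affineSpan_pair h0z1.mem_affineSpan
        (h3c4.right_mem_affineSpan_of_left_ne hv3c))
  exact ⟨z, h0z1, AffineSubspace.right_mem_of_wbtw h5cz (H.v_add_one_mem_P 4) hcQ hv5c,
    Sbtw.sOppSide_of_notMem_of_mem ⟨h5cz, hv5c.symm, hcz_ne⟩ hv5P hcP⟩

theorem HuhJeon.sSameSide_of_mem_P_four (hgp : H.GeneralPosition) (hhj : H.HuhJeon) {y : E3}
    (hy : Wbtw ℝ (H.v 0) y (H.v 1)) (hyQ : y ∈ H.P 4) : (H.P 3).SSameSide (H.v 0) y := by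
  obtain ⟨z, hz, hzQ, hopp⟩ := hhj.exists_wbtw_mem_P_four_sOppSide hgp
  obtain rfl : z = y :=
    eq_of_wbtw_of_wbtw_of_mem hz hy hzQ hyQ (hgp.v_notMem_P (by decide) (by decide) (by decide))
  exact (hhj.sOppSide_P_three hgp).symm.trans hopp

end Hexagon

theorem stmt12_general (H : Hexagon) (hgp : H.GeneralPosition) (hhj : H.HuhJeon)
    (x y : E3) (hx : x ∈ H.edge 0 ∩ H.QLine 2) (hy : y ∈ H.edge 0 ∩ H.QLine 0) :
    (H.P 4).SSameSide x (H.v 1) ∧ y ∈ (H.P 4 : Set E3) ∧ Sbtw ℝ (H.v 1) x y := by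
  obtain ⟨hx0, hxP, -⟩ := hx
  obtain ⟨hy0, -, hyQ⟩ := hy
  replace hx0 := mem_segment_iff_wbtw.1 hx0
  replace hy0 := mem_segment_iff_wbtw.1 hy0
  have hv1Q : H.v 1 ∉ H.P 4 := hgp.v_notMem_P (by decide) (by decide) (by decide)
  have hxy : Sbtw ℝ (H.v 1) x y :=
    sbtw_of_wbtw_of_sSameSide hx0 hy0 hxP (hgp.v_notMem_P (by decide) (by decide) (by decide))
      (hhj.sSameSide_of_mem_P_four hgp hy0 hyQ)
  refine ⟨⟨hxy.wbtw.symm.wSameSide₂₃ hyQ, fun hxQ => hv1Q ?_, hv1Q⟩, hyQ, hxy⟩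
  exact AffineSubspace.right_mem_of_wbtw hxy.wbtw.symm hyQ hxQ hxy.right_ne

/-- With `L1 = P2 ∩ P5` (= `QLine 0`) and `L3 = P4 ∩ P1` (= `QLine 2`), the
point `p³₁₂ = L3 ∩ e12` lies strictly between `v2` and `p¹₁₂ = L1 ∩ e12` along `e12`;
equivalently `p³₁₂` lies in the open half-space of `P5` containing `v2` while `p¹₁₂` lies
on `P5`.  (Here `e12` is edge `0`, `v2` is `v 1`, `P5` is `P 4`.) -/
theorem stmt12 (H : Hexagon) (hgp : H.GeneralPosition) (hhj : H.HuhJeon)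
    (htre : IsTrefoil H.K)
    (x y : E3) (hx : x ∈ H.edge 0 ∩ H.QLine 2) (hy : y ∈ H.edge 0 ∩ H.QLine 0) :
    (H.P 4).SSameSide x (H.v 1) ∧ y ∈ (H.P 4 : Set E3) ∧ Sbtw ℝ (H.v 1) x y :=
  stmt12_general H hgp hhj x y hx hy
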